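/- Let q ≥ 3, let s = 5, and let C_5 be the cycle graph on vertices {1,2,3,4,5} with edges {1,2}, {2,3}, {3,4}, {4,5}, {5,1}. Then the minimum distance of the edge code of C_5 is δ(C_{C_5}) = (q−1)^5 − (q−1)^4 = (q−2)(q−1)^4. -/

import Mathlib

open MvPolynomial

/-- The affine torus `T = (K*)^s`: points of `K^s` with all coordinates nonzero. -/
abbrev Torus (s : ℕ) (K : Type) [Zero K] := {P : Fin s → K // ∀ i, P i ≠ 0}

/-- The evaluation map `f ↦ (f(P))_{P ∈ T}` as a linear map. -/
noncomputable def evalTorus (s : ℕ) (K : Type) [Field K] :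
    MvPolynomial (Fin s) K →ₗ[K] (Torus s K → K) :=
  LinearMap.pi fun P => (aeval (P.1 : Fin s → K)).toLinearMap

/-- The edge code of a hypergraph with edge set `E` on vertex set `{1,…,s}`:
the image under evaluation of the span of the squarefree monomials `∏_{j ∈ e} t_j`. -/
noncomputable def edgeCode (s : ℕ) (K : Type) [Field K] (E : Set (Finset (Fin s))) :
    Submodule K (Torus s K → K) :=
  (Submodule.span K ((fun e : Finset (Fin s) => ∏ j ∈ e, X j) '' E)).map (evalTorus s K)

/-- Hamming weight of a word indexed by the torus. -/
noncomputable def wt {s : ℕ} {K : Type} [Field K] (c : Torus s K → K) : ℕ :=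
  {P | c P ≠ 0}.ncard

/-- Minimum distance of a linear code: the least Hamming weight of a nonzero codeword. -/
noncomputable def minDist {s : ℕ} {K : Type} [Field K] (C : Submodule K (Torus s K → K)) : ℕ :=
  sInf {w : ℕ | ∃ c ∈ C, c ≠ 0 ∧ wt c = w}

/-!
Every codeword is the evaluation of `f = ∑ wᵢ tᵢ tᵢ₊₁` (indices mod 5) with `w ≠ 0`, so the claim
is that such an `f` has at most `(q-1)^4` zeros on the torus, with equality for
`t₀t₁ - t₁t₂ = t₁(t₀ - t₂)`. Rotating the cycle, we may assume `w₀ ≠ 0` and that `w₄ ≠ 0` forces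
`w₃ ≠ 0`. Then `f = t₀(w₀t₁ + w₄t₄) + t₂(w₁t₁ + w₂t₃) + w₃t₃t₄`, and a zero of `f` is determined
by its four coordinates other than `t₀` when `w₀t₁ + w₄t₄ ≠ 0`, and by those other than `t₂`
otherwise (then `w₄ ≠ 0`, so `w₃t₃t₄ ≠ 0` and the coefficient of `t₂` cannot vanish). Both cases
together inject the zeros into `(K*)^4`.
-/

section CycleCode

variable {K : Type} [Field K]

lemma card_torus [Fintype K] (s : ℕ) : Nat.card (Torus s K) = (Fintype.card K - 1) ^ s := by
  rw [Nat.card_congr (Equiv.subtypePiEquivPi.trans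
      (Equiv.piCongrRight fun _ => unitsEquivNeZero.symm)),
    Nat.card_fun, Nat.card_units, Nat.card_eq_fintype_card, Nat.card_fin]

lemma wt_add_card_zeros [Finite K] {s : ℕ} (c : Torus s K → K) :
    wt c + Nat.card {P // c P = 0} = Nat.card (Torus s K) := by
  rw [wt, ← Set.ncard_add_ncard_compl {P | c P ≠ 0}, Set.compl_ofPred,
    ← Nat.card_coe_set_eq {P | ¬ c P ≠ 0}]
  simp only [not_not]
  rfl

lemma minDist_eq_wt {s : ℕ} {C : Submodule K (Torus s K → K)} {c : Torus s K → K}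
    (hc : c ∈ C) (hc0 : c ≠ 0) (hmin : ∀ c' ∈ C, c' ≠ 0 → wt c ≤ wt c') :
    minDist C = wt c :=
  le_antisymm (Nat.sInf_le ⟨c, hc, hc0, rfl⟩)
    (le_csInf ⟨_, c, hc, hc0, rfl⟩ fun _ ⟨c', hc', hc'0, h⟩ => h ▸ hmin c' hc' hc'0)

open Fin.NatCast in
lemma Fin.exists_and_not_sub_one_or_forall {n : ℕ} [NeZero n] {p : Fin n → Prop}
    (h : ∃ i, p i) : ∃ k, p k ∧ (¬ p (k - 1) ∨ ∀ i, p i) := by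
  by_contra! hcon
  obtain ⟨k, hk⟩ := h
  have hall : ∀ m : ℕ, p (k - m) := by
    intro m
    induction m with
    | zero => simpa using hk
    | succ m ih => simpa [sub_sub] using (hcon _ ih).1
  obtain ⟨i, hi⟩ := (hcon k hk).2
  exact hi (by simpa using hall (k - i).val)

lemma Fin.ne_add_one {n : ℕ} [NeZero n] (hn : 1 < n) (i : Fin n) : i ≠ i + 1 := by
  obtain ⟨m, rfl⟩ : ∃ m, n = m + 1 := ⟨n - 1, by omega⟩
  simpa [eq_comm, Fin.one_eq_zero_iff] using hn.ne'

section Cycle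

variable {n : ℕ} [NeZero n]

/-- Since `i + 1` wraps around in `Fin n`, this is the word of `∑ wᵢ tᵢ tᵢ₊₁` in the edge code
of the `n`-cycle. -/
def cycleWord (w : Fin n → K) (P : Torus n K) : K :=
  ∑ i, w i * (P.1 i * P.1 (i + 1))

lemma evalTorus_sum_smul_X_mul_X (w : Fin n → K) :
    evalTorus n K (∑ i, w i • (X i * X (i + 1))) = cycleWord w := by
  ext P
  simp [evalTorus, cycleWord]

lemma coe_edgeCode_cycle (hn : 1 < n) :
    (edgeCode n K (Set.range fun i : Fin n => {i, i + 1}) : Set (Torus n K → K)) =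
      Set.range cycleWord := by
  ext c
  simp only [edgeCode, Submodule.map_coe, ← Set.range_comp, Function.comp_def,
    Finset.prod_pair (Fin.ne_add_one hn _), Set.mem_image, SetLike.mem_coe,
    Submodule.mem_span_range_iff_exists_fun, exists_exists_eq_and,
    evalTorus_sum_smul_X_mul_X, Set.mem_range]

lemma card_zeros_cycleWord_rotate (w : Fin n → K) (k : Fin n) :
    Nat.card {P // cycleWord (fun i => w (i + k)) P = 0} =
      Nat.card {P // cycleWord w P = 0} := by
  let shift : Torus n K ≃ Torus n K :=
    ((Equiv.addRight k).arrowCongr (Equiv.refl K)).subtypeEquiv fun P =>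
      ⟨fun h i => h _, fun h i => by simpa using h (i + k)⟩
  refine Nat.card_congr (shift.subtypeEquiv fun P => ?_)
  suffices cycleWord (fun i => w (i + k)) P = cycleWord w (shift P) by rw [this]
  exact Fintype.sum_equiv (Equiv.addRight k) _ _ fun i => by simp [shift, add_right_comm _ k 1]

end Cycle

lemma cycleWord_five (w : Fin 5 → K) (P : Torus 5 K) :
    cycleWord w P = P.1 0 * (w 0 * P.1 1 + w 4 * P.1 4) +
      (P.1 2 * (w 1 * P.1 1 + w 2 * P.1 3) + w 3 * (P.1 3 * P.1 4)) := by
  simp [cycleWord, Fin.sum_univ_five]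
  ring

lemma card_zeros_cycleWord_le_card_torus_four [Finite K] (w : Fin 5 → K) (h0 : w 0 ≠ 0)
    (h43 : w 4 ≠ 0 → w 3 ≠ 0) :
    Nat.card {P // cycleWord w P = 0} ≤ Nat.card (Torus 4 K) := by
  classical
  let forget (P : {P // cycleWord w P = 0}) : Torus 4 K :=
    ⟨![P.1.1 1, if w 0 * P.1.1 1 + w 4 * P.1.1 4 = 0 then P.1.1 0 else P.1.1 2, P.1.1 3, P.1.1 4],
      by intro i; fin_cases i <;> simp [P.1.2 _]; split_ifs <;> exact P.1.2 _⟩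
  refine Nat.card_le_card_of_injective forget ?_
  rintro ⟨P, hP⟩ ⟨Q, hQ⟩ hPQ
  have h i : (forget ⟨P, hP⟩).1 i = (forget ⟨Q, hQ⟩).1 i := by rw [hPQ]
  have h1 : P.1 1 = Q.1 1 := h 0
  have h3 : P.1 3 = Q.1 3 := h 2
  have h4 : P.1 4 = Q.1 4 := h 3
  have h_mid := h 1
  simp only [forget, Matrix.cons_val_one, Matrix.cons_val_zero, ← h1, ← h4] at h_mid
  rw [cycleWord_five] at hP hQ
  rw [← h1, ← h3, ← h4] at hQ
  have h02 : P.1 0 = Q.1 0 ∧ P.1 2 = Q.1 2 := by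
    by_cases hα : w 0 * P.1 1 + w 4 * P.1 4 = 0
    · have hγ : w 1 * P.1 1 + w 2 * P.1 3 ≠ 0 := by
        intro hγ
        have hw4 : w 4 ≠ 0 := fun hw4 => mul_ne_zero h0 (P.2 1) (by simpa [hw4] using hα)
        rw [hα, hγ] at hP
        simp [h43 hw4, P.2 3, P.2 4] at hP
      rw [if_pos hα, if_pos hα] at h_mid
      exact ⟨h_mid, mul_right_cancel₀ hγ (by linear_combination hP - hQ - (P.1 0 - Q.1 0) * hα)⟩
    · rw [if_neg hα, if_neg hα] at h_mid
      rw [← h_mid] at hQ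
      exact ⟨mul_right_cancel₀ hα (by linear_combination hP - hQ), h_mid⟩
  ext i
  fin_cases i
  exacts [h02.1, h1, h02.2, h3, h4]

section Finite

variable [Fintype K]

lemma card_zeros_cycleWord_le {w : Fin 5 → K} (hw : w ≠ 0) :
    Nat.card {P // cycleWord w P = 0} ≤ (Fintype.card K - 1) ^ 4 := by
  obtain ⟨k, hk, hprev⟩ :=
    Fin.exists_and_not_sub_one_or_forall (p := (w · ≠ 0)) (Function.ne_iff.mp hw)
  rw [← card_zeros_cycleWord_rotate w k, ← card_torus]
  refine card_zeros_cycleWord_le_card_torus_four _ (by simpa using hk) fun h4 => ?_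
  have h4k : ∀ k : Fin 5, 4 + k = k - 1 := by decide
  rcases hprev with hprev | hall
  · exact absurd (h4k k ▸ h4) hprev
  · exact hall _

lemma sub_le_wt_cycleWord {w : Fin 5 → K} (hw : w ≠ 0) :
    (Fintype.card K - 1) ^ 5 - (Fintype.card K - 1) ^ 4 ≤ wt (cycleWord w) := by
  have h := wt_add_card_zeros (cycleWord w)
  have hzeros := card_zeros_cycleWord_le hw
  rw [card_torus] at h
  omega

def minWeightCoeffs : Fin 5 → K := ![1, -1, 0, 0, 0]

lemma card_torus_four_le_card_zeros_minWeight :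
    Nat.card (Torus 4 K) ≤ Nat.card {P // cycleWord (minWeightCoeffs : Fin 5 → K) P = 0} := by
  refine Nat.card_le_card_of_injective
    (fun Q => ⟨⟨![Q.1 0, Q.1 1, Q.1 0, Q.1 2, Q.1 3], ?_⟩, ?_⟩) ?_
  · intro i; fin_cases i <;> simp [Q.2 _]
  · simp [cycleWord_five, minWeightCoeffs]
  · intro Q R h
    have h' j := congrArg (fun P => P.1.1 j) h
    ext i
    fin_cases i
    exacts [h' 0, h' 1, h' 3, h' 4]

lemma wt_cycleWord_minWeight_le :
    wt (cycleWord (minWeightCoeffs : Fin 5 → K)) ≤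
      (Fintype.card K - 1) ^ 5 - (Fintype.card K - 1) ^ 4 := by
  have h := wt_add_card_zeros (cycleWord (minWeightCoeffs : Fin 5 → K))
  have hzeros := card_torus_four_le_card_zeros_minWeight (K := K)
  rw [card_torus] at h hzeros
  omega

lemma cycleWord_minWeight_ne_zero (hK : 2 < Fintype.card K) :
    cycleWord (minWeightCoeffs : Fin 5 → K) ≠ 0 := by
  classical
  obtain ⟨u, hu⟩ :=
    Fintype.exists_ne_of_one_lt_card (α := Kˣ) (by rw [Fintype.card_units]; omega) 1
  intro h
  have h_eval := congrFun h ⟨![1, 1, u, 1, 1], by intro i; fin_cases i <;> simp⟩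
  simp only [cycleWord_five, minWeightCoeffs] at h_eval
  exact hu (Units.val_eq_one.mp (by simp at h_eval; linear_combination -h_eval))

end Finite

lemma edges_cycle_five_eq_range :
    ({ {0, 1}, {1, 2}, {2, 3}, {3, 4}, {4, 0} } : Set (Finset (Fin 5))) =
      Set.range fun i : Fin 5 => {i, i + 1} := by
  ext e
  simp [Fin.exists_fin_succ, eq_comm]

end CycleCode

/-- for `q ≥ 3`, the edge code of the cycle graph `C₅` on five vertices,
with edges `{1,2}, {2,3}, {3,4}, {4,5}, {5,1}`, has minimum distance
`(q-1)^5 - (q-1)^4 = (q-2)(q-1)^4`. -/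
theorem minDist_edgeCode_cycle_five
    (q : ℕ) (hq : 3 ≤ q)
    (K : Type) [Field K] [Fintype K] (hK : Fintype.card K = q) :
    minDist (edgeCode 5 K
        ({ {0, 1}, {1, 2}, {2, 3}, {3, 4}, {4, 0} } : Set (Finset (Fin 5))))
      = (q - 1) ^ 5 - (q - 1) ^ 4 ∧
    (q - 1) ^ 5 - (q - 1) ^ 4 = (q - 2) * (q - 1) ^ 4 := by
  subst hK
  rw [edges_cycle_five_eq_range]
  have hC : ∀ c, c ∈ edgeCode 5 K (Set.range fun i : Fin 5 => {i, i + 1}) ↔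
      c ∈ Set.range cycleWord := fun c => by
    rw [← coe_edgeCode_cycle (by norm_num)]; rfl
  have hlow : ∀ c ∈ edgeCode 5 K (Set.range fun i : Fin 5 => {i, i + 1}), c ≠ 0 →
      (Fintype.card K - 1) ^ 5 - (Fintype.card K - 1) ^ 4 ≤ wt c := by
    intro c hc hc0
    obtain ⟨w, rfl⟩ := (hC c).1 hc
    exact sub_le_wt_cycleWord fun hw => hc0 (funext fun P => by simp [hw, cycleWord])
  have hmem := (hC _).2 ⟨minWeightCoeffs, rfl⟩
  have hne := cycleWord_minWeight_ne_zero (K := K) (by omega)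
  refine ⟨?_, ?_⟩
  · rw [minDist_eq_wt hmem hne fun c hc hc0 => wt_cycleWord_minWeight_le.trans (hlow c hc hc0)]
    exact le_antisymm wt_cycleWord_minWeight_le (hlow _ hmem hne)
  · rw [show Fintype.card K - 2 = Fintype.card K - 1 - 1 by omega, Nat.sub_one_mul, pow_succ']
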